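/- arXiv:1712.02823 — 5 statements merged into one kernel-verified Lean document; each statement's English description precedes it below -/
import Mathlib

section
/- Let F ⊆ ℝ^d be a Lebesgue measurable set and let t₀ be a Lebesgue density point of F, i.e. lim_{r→0} |B(t₀,r) ∩ F| / |B(t₀,r)| = 1. Fix ε > 0 and for 1 ≤ i ≤ d let R_i = {t₀ + s e_i : s ∈ ℝ}, where e_1, …, e_d is the standard basis of ℝ^d. Then for all sufficiently small r > 0 there exist points t_1, …, t_d ∈ (B(t₀, 2r/3) \ B(t₀, r/2)) ∩ F such that dist(t_i, R_i) < ε r for each 1 ≤ i ≤ d. -/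
open Set Metric MeasureTheory Filter Topology

theorem stmt6 {d : ℕ} (F : Set (EuclideanSpace ℝ (Fin d))) (hF : MeasurableSet F)
    (t₀ : EuclideanSpace ℝ (Fin d))
    (ht₀ : Tendsto (fun r : ℝ => volume (F ∩ ball t₀ r) / volume (ball t₀ r))
      (𝓝[>] 0) (𝓝 1))
    (ε : ℝ) (hε : 0 < ε) :
    ∀ᶠ r in 𝓝[>] (0 : ℝ), ∃ t : Fin d → EuclideanSpace ℝ (Fin d), ∀ i : Fin d,
      t i ∈ (ball t₀ (2 * r / 3) \ ball t₀ (r / 2)) ∩ F ∧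
      infDist (t i) {z | ∃ s : ℝ, z = t₀ + s • (EuclideanSpace.single i (1 : ℝ))} < ε * r := by
  rcases Nat.eq_zero_or_pos d with hd | hd
  · subst hd
    filter_upwards [self_mem_nhdsWithin] with r _
    exact ⟨fun _ => t₀, fun i => i.elim0⟩
  haveI : Nontrivial (EuclideanSpace ℝ (Fin d)) :=
    ⟨⟨0, EuclideanSpace.single ⟨0, hd⟩ 1, by
      intro h
      have := congrArg norm h
      simp [EuclideanSpace.norm_single] at this⟩⟩
  set κ := min (1/24 : ℝ) (ε/2) with hκdef
  have hκ0 : 0 < κ := lt_min (by norm_num) (by positivity)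
  have hκ24 : κ ≤ 1/24 := min_le_left _ _
  have hκε : κ ≤ ε/2 := min_le_right _ _
  set δ := ENNReal.ofReal (κ ^ d) with hδdef
  have hδ0 : 0 < δ := ENNReal.ofReal_pos.2 (pow_pos hκ0 d)
  have hδ1 : δ ≤ 1 := ENNReal.ofReal_le_one.2 (pow_le_one₀ hκ0.le (by linarith))
  have h1 : (1:ENNReal) - δ < 1 :=
    ENNReal.sub_lt_self ENNReal.one_ne_top one_ne_zero hδ0.ne'
  have hev := ht₀.eventually (eventually_gt_nhds h1)
  filter_upwards [hev, self_mem_nhdsWithin] with r hrF hr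
  simp only [mem_Ioi] at hr
  have hμB_pos : 0 < volume (ball t₀ r) := measure_ball_pos _ _ hr
  have hμB_ne_top : volume (ball t₀ r) ≠ ⊤ := measure_ball_lt_top.ne
  have hfr : Module.finrank ℝ (EuclideanSpace ℝ (Fin d)) = d := finrank_euclideanSpace_fin
  have hball_eq : ∀ x : EuclideanSpace ℝ (Fin d),
      volume (ball x (κ*r)) = δ * volume (ball t₀ r) := by
    intro x
    rw [Measure.addHaar_ball _ x (by positivity : (0:ℝ) ≤ κ*r),
      Measure.addHaar_ball _ t₀ hr.le, hfr, mul_pow,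
      ENNReal.ofReal_mul (by positivity), mul_assoc]
  -- centers
  set e : Fin d → EuclideanSpace ℝ (Fin d) := fun i => EuclideanSpace.single i (1:ℝ) with he
  set c : Fin d → EuclideanSpace ℝ (Fin d) := fun i => t₀ + (7*r/12) • e i with hc
  have hdc : ∀ i, dist (c i) t₀ = 7*r/12 := by
    intro i
    rw [hc, dist_eq_norm]
    simp [norm_smul, he, EuclideanSpace.norm_single, abs_of_nonneg hr.le]
  have hκr : κ * r ≤ r / 24 := by nlinarith
  have hsub : ∀ i, ball (c i) (κ*r) ⊆ ball t₀ r := by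
    intro i x hx
    have h1 := mem_ball.1 hx
    have h2 := dist_triangle x (c i) t₀
    rw [hdc i] at h2
    exact mem_ball.2 (by linarith)
  have h2 : (1 - δ) * volume (ball t₀ r) < volume (F ∩ ball t₀ r) :=
    (ENNReal.lt_div_iff_mul_lt (Or.inl hμB_pos.ne') (Or.inl hμB_ne_top)).1 hrF
  have hδμ_ne_top : δ * volume (ball t₀ r) ≠ ⊤ :=
    ENNReal.mul_ne_top (lt_of_le_of_lt hδ1 (by norm_num)).ne hμB_ne_top
  have key : ∀ i, (F ∩ ball (c i) (κ*r)).Nonempty := by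
    intro i
    by_contra hcon
    rw [Set.not_nonempty_iff_eq_empty] at hcon
    have hdisj : Disjoint (F ∩ ball t₀ r) (ball (c i) (κ*r)) := by
      rw [Set.disjoint_iff_inter_eq_empty]
      apply Set.eq_empty_of_subset_empty
      rw [← hcon]
      intro x hx
      exact ⟨hx.1.1, hx.2⟩
    have hle : volume (F ∩ ball t₀ r) + volume (ball (c i) (κ*r)) ≤ volume (ball t₀ r) := by
      rw [← measure_union hdisj measurableSet_ball]
      exact measure_mono (Set.union_subset Set.inter_subset_right (hsub i))
    have hgt : volume (ball t₀ r) < volume (F ∩ ball t₀ r) + volume (ball (c i) (κ*r)) := by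
      rw [hball_eq (c i)]
      calc volume (ball t₀ r) = ((1 - δ) + δ) * volume (ball t₀ r) := by
            rw [tsub_add_cancel_of_le hδ1, one_mul]
        _ = (1 - δ) * volume (ball t₀ r) + δ * volume (ball t₀ r) := by rw [add_mul]
        _ < volume (F ∩ ball t₀ r) + δ * volume (ball t₀ r) :=
            ENNReal.add_lt_add_right hδμ_ne_top h2
    exact absurd hle hgt.not_ge
  choose t ht using key
  refine ⟨t, fun i => ?_⟩
  obtain ⟨htF, htb⟩ := ht i
  have hd1 : dist (t i) (c i) < κ*r := mem_ball.1 htb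
  have htri1 := dist_triangle (t i) (c i) t₀
  have htri2 := dist_triangle (c i) (t i) t₀
  rw [hdc i] at htri1
  rw [dist_comm (c i) (t i), hdc i] at htri2
  constructor
  · refine ⟨⟨mem_ball.2 (by linarith), fun hmem => ?_⟩, htF⟩
    have := mem_ball.1 hmem
    linarith
  · have hmem : c i ∈ {z | ∃ s : ℝ, z = t₀ + s • (EuclideanSpace.single i (1 : ℝ))} :=
      ⟨7*r/12, rfl⟩
    calc infDist (t i) _ ≤ dist (t i) (c i) := infDist_le_dist_of_mem hmem
      _ < κ * r := hd1
      _ ≤ ε/2 * r := by nlinarith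
      _ < ε * r := by nlinarith
end

section
/- Let 0 < d < n be integers and let a: ℝ^d → ℝ^{n−d} be Lipschitz with Lip(a) ≤ δ, where δ > 0 is sufficiently small. Let A(t) = (t, a(t)), let E' ⊆ A(ℝ^d), and let F' = A^{-1}(E'). Suppose t₀ ∈ ℝ^d is a Lebesgue density point of F', that a is differentiable at t₀ with derivative da(t₀) = 0, and set x₀ = A(t₀) (so the tangent plane to the graph of a at x₀ is the d-plane through x₀ parallel to ℝ^d × {0}). Fix ε > 0 and for 1 ≤ i ≤ d set L_i = {x₀ + s e_i : s ∈ ℝ}, where e_1, …, e_d span ℝ^d × {0}. Then there is a constant C depending only on n such that for all sufficiently small r > 0 there exist points y_1, …, y_d ∈ (B(x₀, r) \ B(x₀, r/4)) ∩ E' with dist(y_i, L_i) ≤ C ε r for each 1 ≤ i ≤ d. -/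
/-!
For small `r`, the density of `F' = A⁻¹(E')` in `B(t₀, r)` exceeds `1 - η ^ d`, so `F'` meets
every ball `B(c, η r) ⊆ B(t₀, r)`, which carries the volume fraction `η ^ d`. Taking
`η = min ε (1/24)` and `c = t₀ + (3r/8) eᵢ` gives `tᵢ ∈ F'` with `|tᵢ - c| < η r`; since
`da(t₀) = 0`, also `|a(tᵢ) - a(t₀)| ≤ η |tᵢ - t₀|`. Hence `yᵢ = A(tᵢ)` lies in the annulus
`r/4 ≤ |y - x₀| < r` and within `2 ε r` of the point `x₀ + (3r/8) eᵢ` of `Lᵢ`.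
-/

open Set Metric MeasureTheory Filter Topology

noncomputable abbrev GraphSpace (d m : ℕ) :=
  WithLp 2 (EuclideanSpace ℝ (Fin d) × EuclideanSpace ℝ (Fin m))

/-- The graph map `A(t) = (t, a(t))`. -/
noncomputable def graphMap {d m : ℕ} (a : EuclideanSpace ℝ (Fin d) → EuclideanSpace ℝ (Fin m))
    (t : EuclideanSpace ℝ (Fin d)) : GraphSpace d m :=
  (WithLp.equiv 2 (EuclideanSpace ℝ (Fin d) × EuclideanSpace ℝ (Fin m))).symm (t, a t)

open Module

section Density

variable {E : Type*} [NormedAddCommGroup E] [NormedSpace ℝ E] [MeasurableSpace E] [BorelSpace E]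
  [FiniteDimensional ℝ E] (μ : Measure E) [μ.IsAddHaarMeasure]

theorem inter_ball_nonempty_of_one_sub_lt_density {F : Set E} {x c : E} {r η : ℝ}
    (hr : 0 < r) (hη : 0 < η) (hc : η * r + dist c x ≤ r)
    (hF : 1 - ENNReal.ofReal (η ^ finrank ℝ E) < μ (F ∩ ball x r) / μ (ball x r)) :
    (F ∩ ball c (η * r)).Nonempty := by
  by_contra hempty
  have hsub : ball c (η * r) ⊆ ball x r := ball_subset_ball' hc
  have hball_ne_zero : μ (ball x r) ≠ 0 := (measure_ball_pos μ x hr).ne'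
  have hball_ne_top : μ (ball x r) ≠ ⊤ := measure_ball_lt_top.ne
  have hsmall : μ (ball c (η * r)) = ENNReal.ofReal (η ^ finrank ℝ E) * μ (ball x r) := by
    rw [Measure.addHaar_ball_mul_of_pos μ c hη, Measure.addHaar_ball_center μ x]
  have hF_sub : F ∩ ball x r ⊆ ball x r \ ball c (η * r) := fun y ⟨hyF, hyx⟩ =>
    ⟨hyx, fun hyc => hempty ⟨y, hyF, hyc⟩⟩
  have hF_le : μ (F ∩ ball x r) ≤ (1 - ENNReal.ofReal (η ^ finrank ℝ E)) * μ (ball x r) :=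
    calc μ (F ∩ ball x r) ≤ μ (ball x r \ ball c (η * r)) := measure_mono hF_sub
      _ = μ (ball x r) - μ (ball c (η * r)) :=
        measure_sdiff hsub measurableSet_ball.nullMeasurableSet (measure_ball_lt_top.ne)
      _ = (1 - ENNReal.ofReal (η ^ finrank ℝ E)) * μ (ball x r) := by
        rw [hsmall, ENNReal.sub_mul fun _ _ => hball_ne_top, one_mul]
  rw [ENNReal.lt_div_iff_mul_lt (.inl hball_ne_zero) (.inl hball_ne_top)] at hF
  exact hF_le.not_gt hF

theorem eventually_inter_ball_nonempty_of_tendsto_density {F : Set E} {x : E}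
    (hF : Tendsto (fun r => μ (F ∩ ball x r) / μ (ball x r)) (𝓝[>] 0) (𝓝 1))
    {η : ℝ} (hη : 0 < η) :
    ∀ᶠ r in 𝓝[>] (0 : ℝ), ∀ c, η * r + dist c x ≤ r → (F ∩ ball c (η * r)).Nonempty := by
  have hlt : 1 - ENNReal.ofReal (η ^ finrank ℝ E) < 1 :=
    ENNReal.sub_lt_self ENNReal.one_ne_top one_ne_zero (by positivity)
  filter_upwards [hF.eventually (eventually_gt_nhds hlt), self_mem_nhdsWithin] with r hr hr0 c hc
  exact inter_ball_nonempty_of_one_sub_lt_density μ hr0 hη hc hr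

end Density

theorem HasFDerivAt.exists_dist_le_mul_of_fderiv_eq_zero {E F : Type*} [NormedAddCommGroup E]
    [NormedSpace ℝ E] [NormedAddCommGroup F] [NormedSpace ℝ F] {f : E → F} {x : E}
    (hf : HasFDerivAt f (0 : E →L[ℝ] F) x) {c : ℝ} (hc : 0 < c) :
    ∃ ρ > 0, ∀ y, dist y x < ρ → dist (f y) (f x) ≤ c * dist y x := by
  obtain ⟨ρ, hρ, h⟩ := Metric.eventually_nhds_iff.mp (hf.isLittleO.def hc)
  refine ⟨ρ, hρ, fun y hy => ?_⟩
  simpa [dist_eq_norm] using h hy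

theorem WithLp.prod_dist_le_add_of_L2 {α β : Type*} [SeminormedAddCommGroup α]
    [SeminormedAddCommGroup β] (x y : WithLp 2 (α × β)) :
    dist x y ≤ dist x.fst y.fst + dist x.snd y.snd := by
  rw [WithLp.prod_dist_eq_of_L2, Real.sqrt_le_iff]
  have := dist_nonneg (x := x.fst) (y := y.fst)
  have := dist_nonneg (x := x.snd) (y := y.snd)
  constructor <;> nlinarith

section Graph

variable {d m : ℕ} (a : EuclideanSpace ℝ (Fin d) → EuclideanSpace ℝ (Fin m))

theorem dist_le_dist_graphMap (t t' : EuclideanSpace ℝ (Fin d)) :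
    dist t t' ≤ dist (graphMap a t) (graphMap a t') :=
  WithLp.dist_fst_le (graphMap a t) (graphMap a t')

theorem dist_graphMap_add_smul_le (t t₀ u : EuclideanSpace ℝ (Fin d)) (s : ℝ) :
    dist (graphMap a t) (graphMap a t₀ +
        s • (WithLp.equiv 2 (EuclideanSpace ℝ (Fin d) × EuclideanSpace ℝ (Fin m))).symm (u, 0)) ≤
      dist t (t₀ + s • u) + dist (a t) (a t₀) := by
  refine (WithLp.prod_dist_le_add_of_L2 _ _).trans_eq ?_
  simp [graphMap]

theorem graphMap_mem_ball_diff_ball {t t₀ : EuclideanSpace ℝ (Fin d)} {r : ℝ} (hr : 0 < r)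
    {v : EuclideanSpace ℝ (Fin d)} (hv : ‖v‖ = 3 * r / 8) (ht : dist t (t₀ + v) ≤ r / 24)
    (ha : dist (a t) (a t₀) ≤ dist t t₀) :
    graphMap a t ∈ ball (graphMap a t₀) r \ ball (graphMap a t₀) (r / 4) := by
  have hnear : |dist t t₀ - 3 * r / 8| ≤ r / 24 := by
    simpa only [dist_self_add_left, hv] using (abs_dist_sub_le t (t₀ + v) t₀).trans ht
  have hupper : dist (graphMap a t) (graphMap a t₀) ≤ dist t t₀ + dist (a t) (a t₀) :=
    WithLp.prod_dist_le_add_of_L2 _ _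
  have hlower := dist_le_dist_graphMap a t t₀
  obtain ⟨hnear_lo, hnear_hi⟩ := abs_le.1 hnear
  exact ⟨mem_ball.2 (by linarith), fun h => (mem_ball.1 h).not_ge (by linarith)⟩

end Graph

theorem stmt7_general (d m : ℕ) :
    ∃ C : ℝ, 0 < C ∧ ∃ δ₀ : ℝ, 0 < δ₀ ∧
      ∀ (δ : ℝ), 0 < δ → δ ≤ δ₀ →
      ∀ (a : EuclideanSpace ℝ (Fin d) → EuclideanSpace ℝ (Fin m)),
        LipschitzWith (Real.toNNReal δ) a →
      ∀ (E' : Set (GraphSpace d m)), E' ⊆ Set.range (graphMap a) →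
      ∀ (t₀ : EuclideanSpace ℝ (Fin d)),
        Tendsto (fun r : ℝ =>
            volume ((graphMap a ⁻¹' E') ∩ ball t₀ r) / volume (ball t₀ r))
          (𝓝[>] 0) (𝓝 1) →
        HasFDerivAt a (0 : EuclideanSpace ℝ (Fin d) →L[ℝ] EuclideanSpace ℝ (Fin m)) t₀ →
      ∀ (ε : ℝ), 0 < ε →
      ∀ᶠ r in 𝓝[>] (0 : ℝ), ∃ y : Fin d → GraphSpace d m, ∀ i : Fin d,
        y i ∈ (ball (graphMap a t₀) r \ ball (graphMap a t₀) (r / 4)) ∩ E' ∧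
        infDist (y i) {z | ∃ s : ℝ, z = graphMap a t₀ +
            s • (WithLp.equiv 2 (EuclideanSpace ℝ (Fin d) × EuclideanSpace ℝ (Fin m))).symm
              (EuclideanSpace.single i (1 : ℝ), 0)} ≤ C * ε * r := by
  refine ⟨2, two_pos, 1, one_pos, fun δ _ _ a _ E' _ t₀ hdens hderiv ε hε => ?_⟩
  set η := min ε (1 / 24)
  have hη : 0 < η := lt_min hε (by norm_num)
  have hηε : η ≤ ε := min_le_left _ _
  have hη24 : η ≤ 1 / 24 := min_le_right _ _
  obtain ⟨ρ, hρ, hflat⟩ := hderiv.exists_dist_le_mul_of_fderiv_eq_zero hη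
  filter_upwards [eventually_inter_ball_nonempty_of_tendsto_density volume hdens hη,
    Ioo_mem_nhdsGT hρ] with r hmeets ⟨hr, hrρ⟩
  set v : Fin d → EuclideanSpace ℝ (Fin d) := fun i => (3 * r / 8) • EuclideanSpace.single i 1
  have hv : ∀ i, ‖v i‖ = 3 * r / 8 := fun i => by simp [v, norm_smul, abs_of_pos hr]
  have hfit : ∀ i, η * r + dist (t₀ + v i) t₀ ≤ r := fun i => by
    rw [dist_self_add_left, hv]; nlinarith
  choose t ht using fun i => hmeets (t₀ + v i) (hfit i)
  have hclose : ∀ i, dist (t i) t₀ < r := fun i => ball_subset_ball' (hfit i) (ht i).2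
  have hflat_t : ∀ i, dist (a (t i)) (a t₀) ≤ η * dist (t i) t₀ := fun i =>
    hflat _ ((hclose i).trans hrρ)
  refine ⟨fun i => graphMap a (t i), fun i => ⟨⟨?_, (ht i).1⟩, ?_⟩⟩
  · refine graphMap_mem_ball_diff_ball a hr (hv i) ((mem_ball.1 (ht i).2).le.trans ?_) ?_
    · nlinarith
    · exact (hflat_t i).trans (mul_le_of_le_one_left dist_nonneg (by linarith))
  calc infDist _ _ ≤ dist (graphMap a (t i)) (graphMap a t₀ + (3 * r / 8) •
          (WithLp.equiv 2 _).symm (EuclideanSpace.single i 1, 0)) :=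
        infDist_le_dist_of_mem (mem_ofPred.2 ⟨_, rfl⟩)
    _ ≤ dist (t i) (t₀ + v i) + dist (a (t i)) (a t₀) := dist_graphMap_add_smul_le a _ _ _ _
    _ ≤ η * r + η * r :=
        add_le_add (mem_ball.1 (ht i).2).le ((hflat_t i).trans (by gcongr; exact (hclose i).le))
    _ ≤ 2 * ε * r := by nlinarith

theorem stmt7 (d m : ℕ) (hd : 0 < d) (hm : 0 < m) :
    ∃ C : ℝ, 0 < C ∧ ∃ δ₀ : ℝ, 0 < δ₀ ∧
      ∀ (δ : ℝ), 0 < δ → δ ≤ δ₀ →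
      ∀ (a : EuclideanSpace ℝ (Fin d) → EuclideanSpace ℝ (Fin m)),
        LipschitzWith (Real.toNNReal δ) a →
      ∀ (E' : Set (GraphSpace d m)), E' ⊆ Set.range (graphMap a) →
      ∀ (t₀ : EuclideanSpace ℝ (Fin d)),
        Tendsto (fun r : ℝ =>
            volume ((graphMap a ⁻¹' E') ∩ ball t₀ r) / volume (ball t₀ r))
          (𝓝[>] 0) (𝓝 1) →
        HasFDerivAt a (0 : EuclideanSpace ℝ (Fin d) →L[ℝ] EuclideanSpace ℝ (Fin m)) t₀ →
      ∀ (ε : ℝ), 0 < ε →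
      ∀ᶠ r in 𝓝[>] (0 : ℝ), ∃ y : Fin d → GraphSpace d m, ∀ i : Fin d,
        y i ∈ (ball (graphMap a t₀) r \ ball (graphMap a t₀) (r / 4)) ∩ E' ∧
        infDist (y i) {z | ∃ s : ℝ, z = graphMap a t₀ +
            s • (WithLp.equiv 2 (EuclideanSpace ℝ (Fin d) × EuclideanSpace ℝ (Fin m))).symm
              (EuclideanSpace.single i (1 : ℝ), 0)} ≤ C * ε * r :=
  stmt7_general d m
end

section
/- Let 0 < d < n be integers, let E ⊆ ℝⁿ be d-lower content regular with constant c₀ > 0, let a ∈ E, and let V be a d-dimensional linear subspace of ℝⁿ such that for every 0 < s < 1, lim_{r→0} r^{-d} · ℋ^d(E ∩ B(a,r) \ X(a,V,s)) = 0, where X(a,V,s) = {x ∈ ℝⁿ : dist(x−a, V) < s|x−a|} (i.e. V is an approximate tangent d-plane for E at a). Then a is a tangent point of E with tangent plane a + V; that is, lim_{t→0} sup_{y ∈ E ∩ B(a,t)} dist(y, a + V)/t = 0. -/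
/-!
If some `y ∈ E ∩ B(a, t)` were farther than `s t` from `a + V`, the whole ball `B(y, s t / 2)`
would lie in `B(a, 2t)` outside the cone `X(a, V, s/4)`. Lower content regularity gives
`E ∩ B(y, s t / 2)` Hausdorff content, hence Hausdorff measure, at least `c₀ (s t / 2)^d`, a fixed
fraction of `(2t)^d`; for small `t` this contradicts the approximate tangent plane condition.
The distance `s t < dist(y - a, V) ≤ |y - a|` also keeps the radius below `diam E`.
-/

open Set Metric MeasureTheory ENNReal Filter Topology

noncomputable def hContent {n : ℕ} (d : ℕ) (A : Set (EuclideanSpace ℝ (Fin n))) : ℝ≥0∞ :=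
  ⨅ (C : ℕ → Set (EuclideanSpace ℝ (Fin n))) (_ : A ⊆ ⋃ i, C i),
    ∑' i, EMetric.diam (C i) ^ d

def LowerContentRegular {n : ℕ} (d : ℕ) (c₀ : ℝ) (E : Set (EuclideanSpace ℝ (Fin n))) : Prop :=
  ∀ x ∈ E, ∀ r : ℝ, 0 < r → ENNReal.ofReal r < EMetric.diam E →
    ENNReal.ofReal (c₀ * r ^ d) ≤ hContent d (E ∩ ball x r)

def IsAffinePlane {n : ℕ} (d : ℕ) (L : Set (EuclideanSpace ℝ (Fin n))) : Prop :=
  ∃ (z : EuclideanSpace ℝ (Fin n)) (V : Submodule ℝ (EuclideanSpace ℝ (Fin n))),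
    Module.finrank ℝ V = d ∧ L = {y | y - z ∈ V}

noncomputable def beta {n : ℕ} (d : ℕ) (p : ℝ) (E : Set (EuclideanSpace ℝ (Fin n)))
    (x : EuclideanSpace ℝ (Fin n)) (r : ℝ) : ℝ≥0∞ :=
  ⨅ (L : Set (EuclideanSpace ℝ (Fin n))) (_ : IsAffinePlane d L),
    ((∫⁻ t in Ioo (0:ℝ) 1,
        hContent d {y | y ∈ ball x r ∩ E ∧ t * r < infDist y L} *
          ENNReal.ofReal (t ^ (p - 1))) / ENNReal.ofReal r ^ d) ^ (1 / p)

def TangentPoint {n : ℕ} (d : ℕ) (E : Set (EuclideanSpace ℝ (Fin n)))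
    (x : EuclideanSpace ℝ (Fin n)) : Prop :=
  ∃ L : Set (EuclideanSpace ℝ (Fin n)), IsAffinePlane d L ∧
    Tendsto (fun t : ℝ => ⨆ y ∈ E ∩ ball x t, infDist y L / t) (𝓝[>] 0) (𝓝 0)

section Cone

variable {F : Type*} [SeminormedAddCommGroup F]

theorem infDist_setOf_sub_mem (a y : F) (S : Set F) :
    infDist y {z | z - a ∈ S} = infDist (y - a) S := by
  have hS : {z | z - a ∈ S} = (· + a) '' S := by
    ext z; simp [sub_eq_add_neg]
  rw [hS]
  conv_lhs => rw [← sub_add_cancel y a]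
  exact infDist_image (Isometry.of_dist_eq fun _ _ => dist_add_right _ _ a)

/-- The cone `X(a, S, s)` of the approximate tangent plane condition. -/
def cone (a : F) (S : Set F) (s : ℝ) : Set F :=
  {x | infDist (x - a) S < s * dist x a}

theorem ball_subset_ball_diff_cone {a y : F} {S : Set F} {s t : ℝ} (hs0 : 0 < s) (hs : s ≤ 1 / 2)
    (hya : dist y a < t) (hyS : s * t < infDist (y - a) S) :
    ball y (s * t / 2) ⊆ ball a (2 * t) \ cone a S (s / 4) := by
  have ht : 0 < t := dist_nonneg.trans_lt hya
  intro x hx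
  rw [mem_ball] at hx
  have hxa : dist x a < 2 * t := by
    nlinarith [dist_triangle x y a, mul_nonneg (sub_nonneg.2 hs) ht.le]
  refine ⟨mem_ball.2 hxa, fun hxS => ?_⟩
  have hyx : infDist (y - a) S ≤ infDist (x - a) S + dist y x := by
    simpa [dist_sub_right] using infDist_le_infDist_add_dist (x := y - a) (y := x - a) (s := S)
  have hxS' : infDist (x - a) S < s * t / 2 := by
    calc infDist (x - a) S < s / 4 * dist x a := hxS
      _ ≤ s / 4 * (2 * t) := by gcongr
      _ = s * t / 2 := by ring
  linarith [dist_comm x y]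

end Cone

theorem hContent_le_hausdorffMeasure {n d : ℕ} (hd : 0 < d) (A : Set (EuclideanSpace ℝ (Fin n))) :
    hContent d A ≤ μH[(d : ℝ)] A := by
  rw [Measure.hausdorffMeasure_apply]
  refine le_trans ?_ (le_iSup₂ (1 : ℝ≥0∞) zero_lt_one)
  refine le_iInf₂ fun C hC => le_iInf fun _ => ?_
  refine le_trans (iInf₂_le C hC) (ENNReal.tsum_le_tsum fun i => ?_)
  rcases (C i).eq_empty_or_nonempty with h | h
  · rw [h, iSup_neg Set.not_nonempty_empty, le_bot_iff]
    exact (pow_eq_zero_iff hd.ne').2 ediam_empty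
  · rw [iSup_pos h, ← ENNReal.rpow_natCast]
    rfl

namespace LowerContentRegular

variable {n d : ℕ} {c₀ : ℝ} {E : Set (EuclideanSpace ℝ (Fin n))}

theorem ofReal_le_hausdorffMeasure (hd : 0 < d) (hE : LowerContentRegular d c₀ E)
    {y : EuclideanSpace ℝ (Fin n)} (hy : y ∈ E) {ρ : ℝ} (hρ : 0 < ρ)
    (hdiam : ENNReal.ofReal ρ < ediam E) {A : Set (EuclideanSpace ℝ (Fin n))}
    (hA : E ∩ ball y ρ ⊆ A) :
    ENNReal.ofReal (c₀ * ρ ^ d) ≤ μH[(d : ℝ)] A :=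
  calc ENNReal.ofReal (c₀ * ρ ^ d) ≤ hContent d (E ∩ ball y ρ) := hE y hy ρ hρ hdiam
    _ ≤ μH[(d : ℝ)] (E ∩ ball y ρ) := hContent_le_hausdorffMeasure hd _
    _ ≤ μH[(d : ℝ)] A := measure_mono hA

theorem infDist_sub_le (hd : 0 < d) (hE : LowerContentRegular d c₀ E)
    {a : EuclideanSpace ℝ (Fin n)} (ha : a ∈ E) {S : Set (EuclideanSpace ℝ (Fin n))}
    (hS : (0 : EuclideanSpace ℝ (Fin n)) ∈ S) {s t : ℝ} (hs0 : 0 < s) (hs : s ≤ 1 / 2)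
    (hsmall : μH[(d : ℝ)] ((E ∩ ball a (2 * t)) \ cone a S (s / 4)) /
        ENNReal.ofReal ((2 * t) ^ d) < ENNReal.ofReal (c₀ * (s / 4) ^ d))
    {y : EuclideanSpace ℝ (Fin n)} (hy : y ∈ E ∩ ball a t) :
    infDist (y - a) S ≤ s * t := by
  obtain ⟨hyE, hya⟩ := hy
  rw [mem_ball] at hya
  have ht : 0 < t := dist_nonneg.trans_lt hya
  by_contra! hyS
  have hdiam : ENNReal.ofReal (s * t / 2) < ediam E := by
    have hρ : s * t / 2 < dist y a :=
      calc s * t / 2 < infDist (y - a) S := by linarith [mul_pos hs0 ht]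
        _ ≤ dist (y - a) 0 := infDist_le_dist_of_mem hS
        _ = dist y a := by rw [dist_zero_right, dist_eq_norm]
    rw [← ENNReal.ofReal_lt_ofReal_iff_of_nonneg (by positivity), ← edist_dist] at hρ
    exact hρ.trans_le (edist_le_ediam_of_mem hyE ha)
  have hlow := hE.ofReal_le_hausdorffMeasure hd hyE (by positivity) hdiam
    (inter_subset_inter_right E (ball_subset_ball_diff_cone hs0 hs hya hyS) |>.trans
      (inter_sdiff_assoc E _ _).superset)
  rw [show c₀ * (s * t / 2) ^ d = c₀ * (s / 4) ^ d * (2 * t) ^ d by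
      rw [mul_assoc, ← mul_pow]; congr 2; ring,
    ENNReal.ofReal_mul' (by positivity),
    ← ENNReal.le_div_iff_mul_le (Or.inl (by positivity)) (Or.inl ENNReal.ofReal_ne_top)] at hlow
  exact hsmall.not_ge hlow

theorem eventually_forall_infDist_sub_le (hd : 0 < d) (hE : LowerContentRegular d c₀ E)
    (hc₀ : 0 < c₀) {a : EuclideanSpace ℝ (Fin n)} (ha : a ∈ E)
    {S : Set (EuclideanSpace ℝ (Fin n))} (hS : (0 : EuclideanSpace ℝ (Fin n)) ∈ S)
    {s : ℝ} (hs0 : 0 < s) (hs : s ≤ 1 / 2)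
    (happrox : Tendsto (fun r : ℝ => μH[(d : ℝ)] ((E ∩ ball a r) \ cone a S (s / 4)) /
        ENNReal.ofReal (r ^ d)) (𝓝[>] 0) (𝓝 0)) :
    ∀ᶠ t in 𝓝[>] 0, ∀ y ∈ E ∩ ball a t, infDist (y - a) S ≤ s * t := by
  have hsmall := happrox.eventually_lt_const
    (ENNReal.ofReal_pos.2 (by positivity : 0 < c₀ * (s / 4) ^ d))
  filter_upwards [eventually_nhdsGT_zero_mul_left two_pos hsmall] with t ht y hy
  exact hE.infDist_sub_le hd ha hS hs0 hs ht hy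

end LowerContentRegular

theorem stmt10_general {n d : ℕ} (hd : 0 < d)
    (E : Set (EuclideanSpace ℝ (Fin n))) (c₀ : ℝ) (hc₀ : 0 < c₀)
    (hE : LowerContentRegular d c₀ E)
    (a : EuclideanSpace ℝ (Fin n)) (ha : a ∈ E)
    (V : Submodule ℝ (EuclideanSpace ℝ (Fin n)))
    (happrox : ∀ s : ℝ, 0 < s → s < 1 →
      Tendsto (fun r : ℝ =>
          μH[(d : ℝ)] ((E ∩ ball a r) \
            {x | infDist (x - a) (V : Set (EuclideanSpace ℝ (Fin n))) < s * dist x a}) /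
          ENNReal.ofReal (r ^ d))
        (𝓝[>] 0) (𝓝 0)) :
    Tendsto (fun t : ℝ => ⨆ y ∈ E ∩ ball a t, infDist y {z | z - a ∈ V} / t)
      (𝓝[>] 0) (𝓝 0) := by
  have htranslate : ∀ y, infDist y {z | z - a ∈ V} = infDist (y - a) V := fun y =>
    infDist_setOf_sub_mem a y V
  simp_rw [htranslate]
  refine tendsto_order.2 ⟨fun b hb => ?_, fun b hb => ?_⟩
  · filter_upwards [self_mem_nhdsWithin] with t (ht : 0 < t)
    exact hb.trans_le <|
      Real.iSup_nonneg fun y => Real.iSup_nonneg fun _ => div_nonneg infDist_nonneg ht.le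
  · set s := min (b / 2) (1 / 2)
    have hs0 : 0 < s := by positivity
    have hs : s ≤ 1 / 2 := min_le_right _ _
    filter_upwards [self_mem_nhdsWithin, hE.eventually_forall_infDist_sub_le hd hc₀ ha V.zero_mem
      hs0 hs (happrox (s / 4) (by positivity) (by linarith))] with t (ht : 0 < t) hdist
    calc (⨆ y ∈ E ∩ ball a t, infDist (y - a) V / t) ≤ s :=
          Real.iSup_le (fun y => Real.iSup_le (fun hy => (div_le_iff₀ ht).2 (hdist y hy)) hs0.le)
            hs0.le
      _ < b := by linarith [min_le_left (b / 2) (1 / 2)]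

theorem stmt10 {n d : ℕ} (hd : 0 < d) (hdn : d < n)
    (E : Set (EuclideanSpace ℝ (Fin n))) (c₀ : ℝ) (hc₀ : 0 < c₀)
    (hE : LowerContentRegular d c₀ E)
    (a : EuclideanSpace ℝ (Fin n)) (ha : a ∈ E)
    (V : Submodule ℝ (EuclideanSpace ℝ (Fin n))) (hV : Module.finrank ℝ V = d)
    (happrox : ∀ s : ℝ, 0 < s → s < 1 →
      Tendsto (fun r : ℝ =>
          μH[(d : ℝ)] ((E ∩ ball a r) \
            {x | infDist (x - a) (V : Set (EuclideanSpace ℝ (Fin n))) < s * dist x a}) /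
          ENNReal.ofReal (r ^ d))
        (𝓝[>] 0) (𝓝 0)) :
    Tendsto (fun t : ℝ => ⨆ y ∈ E ∩ ball a t, infDist y {z | z - a ∈ V} / t)
      (𝓝[>] 0) (𝓝 0) :=
  stmt10_general hd E c₀ hc₀ hE a ha V happrox
end

section
/- Let 0 < d < n be integers and let E ⊆ ℝⁿ be any set. Then the set Tn(E) of all tangent points of E is contained in a countable union of images of Lipschitz maps from subsets of ℝ^d into ℝⁿ; in particular, Tn(E) is d-rectifiable. -/
open Set Metric MeasureTheory ENNReal Filter Topology

/-!
Near a tangent point `x`, the set `E` lies in ever narrower cones around the tangent plane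
`x + V`. Approximating `V` by the span `W` of `d` vectors from a countable dense set `Q`, every
tangent point lies in one of countably many pieces: the points `x ∈ E` within `r / 2` of some
`c ∈ Q` such that every `y ∈ E` with `|y - x| < r` is within `|y - x| / 2` of `x + W`. On such a
piece the orthogonal projection onto `W`, followed by a linear isometry `W → ℝ^d`, shrinks
distances by at most a factor `2`, so its inverse is a `2`-Lipschitz parametrization by a subset
of `ℝ^d`.
-/

open Module Function

theorem exists_lipschitzOnWith_image_eq_of_antilipschitzWith {α β : Type*} [MetricSpace α]
    [MetricSpace β] [Nonempty α] {K : NNReal} {S : Set α} {φ : α → β}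
    (hφ : AntilipschitzWith K (S.domRestrict φ)) :
    ∃ g : β → α, LipschitzOnWith K g (φ '' S) ∧ g '' (φ '' S) = S := by
  have hinj : InjOn φ S := injOn_iff_injective.2 hφ.injective
  refine ⟨invFunOn φ S, ?_, hinj.leftInvOn_invFunOn.image_image⟩
  rw [lipschitzOnWith_iff_restrict]
  have hsurj : SurjOn φ S (φ '' S) := surjOn_image φ S
  exact hφ.to_rightInvOn' hsurj.mapsTo_invFunOn hsurj.rightInvOn_invFunOn

theorem nonempty_linearIsometry_euclideanSpace_of_finrank_le {W : Type*}
    [NormedAddCommGroup W] [InnerProductSpace ℝ W] [FiniteDimensional ℝ W] {d : ℕ}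
    (h : finrank ℝ W ≤ d) : Nonempty (W →ₗᵢ[ℝ] EuclideanSpace ℝ (Fin d)) := by
  let b := stdOrthonormalBasis ℝ W
  let e : Fin (finrank ℝ W) → EuclideanSpace ℝ (Fin d) :=
    EuclideanSpace.basisFun (Fin d) ℝ ∘ Fin.castLE h
  have he : Orthonormal ℝ e :=
    (EuclideanSpace.basisFun (Fin d) ℝ).orthonormal.comp _ (Fin.castLE_injective h)
  have hb : Orthonormal ℝ b.toBasis := by rw [b.coe_toBasis]; exact b.orthonormal
  refine ⟨(b.toBasis.constr ℝ e).isometryOfOrthonormal hb ?_⟩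
  convert he using 1
  ext1 i
  simp

section ConePiece

variable {F : Type*} [NormedAddCommGroup F] [InnerProductSpace ℝ F]

theorem norm_le_two_mul_norm_starProjection (W : Submodule ℝ F) [W.HasOrthogonalProjection]
    {v u : F} (hu : u ∈ W) (hvu : ‖v - u‖ ≤ ‖v‖ / 2) : ‖v‖ ≤ 2 * ‖W.starProjection v‖ := by
  have hmin : ‖v - W.starProjection v‖ ≤ ‖v - u‖ := by
    rw [W.starProjection_minimal]
    exact ciInf_le ⟨0, forall_mem_range.2 fun _ => norm_nonneg _⟩ (⟨u, hu⟩ : W)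
  have := norm_sub_le_norm_sub_add_norm_sub v (W.starProjection v) 0
  simp only [sub_zero] at this
  linarith

def conePiece (E : Set F) (W : Submodule ℝ F) (r : ℝ) (c : F) : Set F :=
  {x ∈ E ∩ ball c (r / 2) | ∀ y ∈ E, dist y x < r → ∃ u ∈ W, ‖y - x - u‖ ≤ dist y x / 2}

theorem dist_le_two_mul_norm_starProjection_of_mem_conePiece {E : Set F} {W : Submodule ℝ F}
    [W.HasOrthogonalProjection] {r : ℝ} {c x y : F} (hx : x ∈ conePiece E W r c)
    (hy : y ∈ conePiece E W r c) : dist y x ≤ 2 * ‖W.starProjection (y - x)‖ := by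
  have hyx : dist y x < r := by
    have := dist_triangle_right y x c
    linarith [mem_ball.1 hx.1.2, mem_ball.1 hy.1.2]
  obtain ⟨u, hu, hyxu⟩ := hx.2 y hy.1.1 hyx
  rw [dist_eq_norm] at hyxu ⊢
  exact norm_le_two_mul_norm_starProjection W hu hyxu

theorem exists_lipschitzOnWith_image_superset_conePiece (E : Set F) (W : Submodule ℝ F)
    [FiniteDimensional ℝ W] {d : ℕ} (hW : finrank ℝ W ≤ d) (r : ℝ) (c : F) :
    ∃ (s : Set (EuclideanSpace ℝ (Fin d))) (f : EuclideanSpace ℝ (Fin d) → F),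
      LipschitzOnWith 2 f s ∧ conePiece E W r c ⊆ f '' s := by
  obtain ⟨ι⟩ := nonempty_linearIsometry_euclideanSpace_of_finrank_le hW
  have hφ : AntilipschitzWith 2
      ((conePiece E W r c).domRestrict (ι ∘ W.orthogonalProjectionOnto)) := by
    refine AntilipschitzWith.of_le_mul_dist fun x y => ?_
    simp only [domRestrict_apply, comp_apply, Subtype.dist_eq, ι.dist_map, dist_eq_norm,
      ← map_sub, NNReal.coe_ofNat]
    have := dist_le_two_mul_norm_starProjection_of_mem_conePiece y.2 x.2
    rwa [dist_eq_norm, W.starProjection_apply] at this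
  obtain ⟨f, hf, hfS⟩ := exists_lipschitzOnWith_image_eq_of_antilipschitzWith hφ
  exact ⟨_, f, hf, hfS.superset⟩

end ConePiece

theorem Dense.exists_span_approx_of_finrank_eq {F : Type*} [NormedAddCommGroup F]
    [InnerProductSpace ℝ F] {Q : Set F} (hQ : Dense Q) (V : Submodule ℝ F)
    [FiniteDimensional ℝ V] {d : ℕ} (hV : finrank ℝ V = d) {ε : ℝ} (hε : 0 < ε) :
    ∃ w : Fin d → F, (∀ i, w i ∈ Q) ∧
      ∀ v ∈ V, ∃ u ∈ Submodule.span ℝ (range w), ‖v - u‖ ≤ ε * ‖v‖ := by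
  let b : OrthonormalBasis (Fin d) ℝ V := (stdOrthonormalBasis ℝ V).reindex (finCongr hV)
  have hδ : 0 < ε / (d + 1) := by positivity
  choose w hwQ hbw using fun i => hQ.exists_dist_lt (b i : F) hδ
  refine ⟨w, hwQ, fun v hv => ?_⟩
  let c : Fin d → ℝ := fun i => inner ℝ (b i : F) v
  have hc : ∀ i, ‖c i‖ ≤ ‖v‖ := fun i => by
    simpa [c, b.orthonormal.1 i] using norm_inner_le_norm (𝕜 := ℝ) (b i) ⟨v, hv⟩
  have hv_eq : v = ∑ i, c i • (b i : F) := by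
    simpa [c] using congrArg Subtype.val (b.sum_repr' ⟨v, hv⟩).symm
  refine ⟨∑ i, c i • w i, Submodule.sum_mem _ fun i _ =>
    Submodule.smul_mem _ _ (Submodule.subset_span (mem_range_self i)), ?_⟩
  calc ‖v - ∑ i, c i • w i‖ = ‖∑ i, c i • ((b i : F) - w i)‖ := by
        simp_rw [smul_sub, Finset.sum_sub_distrib, ← hv_eq]
    _ ≤ ∑ i, ‖c i‖ * ‖(b i : F) - w i‖ :=
        (norm_sum_le _ _).trans_eq (by simp_rw [norm_smul])
    _ ≤ ∑ _i : Fin d, ‖v‖ * (ε / (d + 1)) := by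
        gcongr with i
        · exact hc i
        · rw [← dist_eq_norm]; exact (hbw i).le
    _ ≤ ε * ‖v‖ := by
        rw [Finset.sum_const, Finset.card_univ, Fintype.card_fin, nsmul_eq_mul]
        have hd : (d : ℝ) ≤ d + 1 := by linarith
        calc (d : ℝ) * (‖v‖ * (ε / (d + 1))) = ε * ‖v‖ * (d / (d + 1)) := by ring
          _ ≤ ε * ‖v‖ * 1 := by gcongr; exact div_le_one_of_le₀ hd (by positivity)
          _ = ε * ‖v‖ := mul_one _

theorem Real.le_biSup_of_forall_le {α : Type*} {f : α → ℝ} {S : Set α} {a : ℝ}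
    (hf : ∀ z ∈ S, f z ≤ a) {y : α} (hy : y ∈ S) : f y ≤ ⨆ z ∈ S, f z := by
  -- in `ℝ`, `⨆ _ : z ∈ S, f z` is `0` when `z ∉ S`
  have hbdd : BddAbove (range fun z => ⨆ _ : z ∈ S, f z) := by
    refine ⟨max a 0, forall_mem_range.2 fun z => Real.iSup_le (fun hz => ?_) (le_max_right _ _)⟩
    exact (hf z hz).trans (le_max_left _ _)
  simpa only [ciSup_pos hy] using le_ciSup hbdd y

theorem eventually_forall_infDist_lt_of_tendsto_biSup {X : Type*} [PseudoMetricSpace X]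
    {E L : Set X} {x : X}
    (h : Tendsto (fun t : ℝ => ⨆ y ∈ E ∩ ball x t, infDist y L / t) (𝓝[>] 0) (𝓝 0))
    {ε : ℝ} (hε : 0 < ε) : ∀ᶠ t in 𝓝[>] 0, ∀ y ∈ E ∩ ball x t, infDist y L < ε * t := by
  filter_upwards [h.eventually_lt_const hε, self_mem_nhdsWithin] with t hsup (ht : 0 < t) y hy
  have hbound : ∀ z ∈ E ∩ ball x t, infDist z L / t ≤ (infDist x L + t) / t := fun z hz => by
    gcongr
    linarith [infDist_le_infDist_add_dist (x := z) (y := x) (s := L), (mem_ball.1 hz.2).le]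
  have := (Real.le_biSup_of_forall_le hbound hy).trans_lt hsup
  rwa [div_lt_iff₀ ht] at this

theorem TangentPoint.exists_submodule_approx {n d : ℕ} {E : Set (EuclideanSpace ℝ (Fin n))}
    {x : EuclideanSpace ℝ (Fin n)} (hxE : x ∈ E) (hx : TangentPoint d E x) :
    ∃ V : Submodule ℝ (EuclideanSpace ℝ (Fin n)), finrank ℝ V = d ∧
      ∀ ε > 0, ∃ r > 0, ∀ y ∈ E, dist y x < r → ∃ v ∈ V, ‖y - x - v‖ ≤ ε * dist y x := by
  obtain ⟨L, ⟨z, V, hV, rfl⟩, hlim⟩ := hx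
  refine ⟨V, hV, fun ε hε => ?_⟩
  have hL : IsClosed {y | y - z ∈ V} :=
    V.closed_of_finiteDimensional.preimage (continuous_sub_right z)
  have hLne : {y | y - z ∈ V}.Nonempty := ⟨z, by simp⟩
  have hxL : x - z ∈ V := by
    have hdist : infDist x {y | y - z ∈ V} ≤ 0 := by
      refine ge_of_tendsto
        (tendsto_nhdsWithin_of_tendsto_nhds tendsto_id (s := Ioi (0 : ℝ))) ?_
      filter_upwards [eventually_forall_infDist_lt_of_tendsto_biSup hlim one_pos,
        self_mem_nhdsWithin] with t ht (ht0 : 0 < t)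
      simpa using (ht x ⟨hxE, mem_ball_self ht0⟩).le
    exact (hL.mem_iff_infDist_zero hLne).2 (le_antisymm hdist infDist_nonneg)
  obtain ⟨r, hr, hrL⟩ := mem_nhdsGT_iff_exists_Ioo_subset.1
    (eventually_forall_infDist_lt_of_tendsto_biSup hlim (half_pos hε))
  refine ⟨r / 2, half_pos hr, fun y hyE hyx => ?_⟩
  rcases eq_or_ne y x with rfl | hne
  · exact ⟨0, V.zero_mem, by simp⟩
  have hpos : 0 < dist y x := dist_pos.2 hne
  have hyL : infDist y {y | y - z ∈ V} < ε / 2 * (2 * dist y x) :=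
    hrL ⟨by positivity, by linarith⟩ y ⟨hyE, mem_ball.2 (by linarith)⟩
  rw [← mul_assoc, div_mul_cancel₀ _ two_ne_zero] at hyL
  obtain ⟨p, hpL, hyp⟩ := (infDist_lt_iff hLne).1 hyL
  refine ⟨p - x, by simpa using V.sub_mem hpL hxL, ?_⟩
  rw [sub_sub_sub_cancel_right, ← dist_eq_norm]
  exact hyp.le

theorem TangentPoint.exists_mem_conePiece {n d : ℕ} {E Q : Set (EuclideanSpace ℝ (Fin n))}
    (hQ : Dense Q) {x : EuclideanSpace ℝ (Fin n)} (hxE : x ∈ E) (hx : TangentPoint d E x) :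
    ∃ (w : Fin d → EuclideanSpace ℝ (Fin n)) (k : ℕ) (c : EuclideanSpace ℝ (Fin n)),
      (∀ i, w i ∈ Q) ∧ c ∈ Q ∧
        x ∈ conePiece E (Submodule.span ℝ (range w)) (1 / (k + 1)) c := by
  obtain ⟨V, hV, hVcone⟩ := hx.exists_submodule_approx hxE
  obtain ⟨r, hr, hcone⟩ := hVcone (1 / 4) (by norm_num)
  obtain ⟨w, hwQ, hw⟩ := hQ.exists_span_approx_of_finrank_eq V hV (ε := 1 / 5) (by norm_num)
  obtain ⟨k, hk⟩ := exists_nat_one_div_lt hr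
  obtain ⟨c, hcQ, hxc⟩ := hQ.exists_dist_lt x (half_pos (Nat.one_div_pos_of_nat (n := k)))
  refine ⟨w, k, c, hwQ, hcQ, ⟨hxE, mem_ball.2 hxc⟩, fun y hyE hyx => ?_⟩
  obtain ⟨v, hvV, hyv⟩ := hcone y hyE (hyx.trans hk)
  obtain ⟨u, hu, hvu⟩ := hw v hvV
  refine ⟨u, hu, ?_⟩
  have hv : ‖v‖ ≤ dist y x + ‖y - x - v‖ := by
    simpa [dist_eq_norm] using norm_le_insert (y - x) v
  calc ‖y - x - u‖ ≤ ‖y - x - v‖ + ‖v - u‖ := norm_sub_le_norm_sub_add_norm_sub _ _ _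
    _ ≤ dist y x / 2 := by linarith

theorem stmt11_general {n d : ℕ}
    (E : Set (EuclideanSpace ℝ (Fin n))) :
    ∃ (s : ℕ → Set (EuclideanSpace ℝ (Fin d)))
      (f : ℕ → EuclideanSpace ℝ (Fin d) → EuclideanSpace ℝ (Fin n))
      (K : ℕ → NNReal),
      (∀ i, LipschitzOnWith (K i) (f i) (s i)) ∧
      {x ∈ E | TangentPoint d E x} ⊆ ⋃ i, f i '' s i := by
  obtain ⟨Q, hQc, hQ⟩ := TopologicalSpace.exists_countable_dense (EuclideanSpace ℝ (Fin n))
  have : Countable Q := hQc.to_subtype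
  have : Nonempty Q := hQ.nonempty.to_subtype
  choose s f hf hpiece using fun i : (Fin d → Q) × ℕ × Q =>
    exists_lipschitzOnWith_image_superset_conePiece E
      (Submodule.span ℝ (range (Subtype.val ∘ i.1)))
      ((finrank_range_le_card _).trans_eq (Fintype.card_fin d)) (1 / (i.2.1 + 1)) i.2.2
  obtain ⟨e, he⟩ := exists_surjective_nat ((Fin d → Q) × ℕ × Q)
  refine ⟨s ∘ e, f ∘ e, fun _ => 2, fun m => hf (e m), ?_⟩
  rintro x ⟨hxE, hx⟩
  obtain ⟨w, k, c, hwQ, hcQ, hxw⟩ := hx.exists_mem_conePiece hQ hxE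
  obtain ⟨m, hm⟩ := he (fun j => ⟨w j, hwQ j⟩, k, ⟨c, hcQ⟩)
  refine mem_iUnion.2 ⟨m, ?_⟩
  rw [comp_apply, comp_apply, hm]
  exact hpiece _ hxw

theorem stmt11 {n d : ℕ} (hd : 0 < d) (hdn : d < n)
    (E : Set (EuclideanSpace ℝ (Fin n))) :
    ∃ (s : ℕ → Set (EuclideanSpace ℝ (Fin d)))
      (f : ℕ → EuclideanSpace ℝ (Fin d) → EuclideanSpace ℝ (Fin n))
      (K : ℕ → NNReal),
      (∀ i, LipschitzOnWith (K i) (f i) (s i)) ∧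
      {x ∈ E | TangentPoint d E x} ⊆ ⋃ i, f i '' s i :=
  stmt11_general E
end

section
/- Let 0 < d < n be integers, let E ⊆ ℝⁿ, let V be a d-dimensional linear subspace of ℝⁿ, let θ ∈ (0, π/2) and 0 < r < ∞, and suppose that for every a ∈ E, E ∩ B(a,r) \ {a} ⊆ X(a,V,θ). Then: (i) if diam E < r, then |Π_V a − Π_V b| ≥ cos θ · |a − b| for all a, b ∈ E, where Π_V is the orthogonal projection onto V; hence Π_V restricted to E is injective and its inverse is Lipschitz with constant 1/cos θ; and (ii) in general, E is d-rectifiable. -/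
open Set Metric MeasureTheory ENNReal Filter Topology

/-!
If `a, b ∈ E` are closer than `r`, then `b - a` lies in the cone `X(0, V, θ)`, so by Pythagoras
`|Π_V (b - a)| ≥ cos θ · |b - a|`. Thus `Π_V` is bi-Lipschitz on every piece of `E` of diameter
`< r`, and its inverse, precomposed with an isometry `ℝ^d ≃ V`, parametrizes that piece by a
Lipschitz map. Since `ℝⁿ` is separable, countably many such pieces cover `E`.
-/

open Function

section Projection

variable {E : Type*} [NormedAddCommGroup E] [InnerProductSpace ℝ E]
  (K : Submodule ℝ E) [K.HasOrthogonalProjection]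

theorem Submodule.norm_sub_starProjection_eq_infDist (x : E) :
    ‖x - K.starProjection x‖ = infDist x K := by
  refine le_antisymm ?_ ?_
  · rw [infDist_eq_iInf, starProjection_minimal]
    refine le_ciInf fun y => ?_
    rw [dist_eq_norm]
    exact ciInf_le ⟨0, forall_mem_range.2 fun _ => norm_nonneg _⟩ y
  · rw [← dist_eq_norm]
    exact infDist_le_dist_of_mem (K.starProjection_apply_mem x)

theorem Submodule.cos_mul_norm_le_norm_starProjection {θ : ℝ} (hθ : 0 ≤ Real.cos θ) {x : E}
    (hx : infDist x K ≤ Real.sin θ * ‖x‖) :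
    Real.cos θ * ‖x‖ ≤ ‖K.starProjection x‖ := by
  have hperp : ‖x - K.starProjection x‖ ^ 2 ≤ (Real.sin θ * ‖x‖) ^ 2 :=
    pow_le_pow_left₀ (norm_nonneg _) (K.norm_sub_starProjection_eq_infDist x ▸ hx) 2
  have hpyth := K.norm_sq_eq_add_norm_sq_starProjection x
  rw [K.starProjection_orthogonal_val] at hpyth
  refine (pow_le_pow_iff_left₀ (by positivity) (norm_nonneg _) two_ne_zero).1 ?_
  nlinarith [Real.sin_sq_add_cos_sq θ]

theorem Submodule.cos_mul_dist_le_dist_starProjection {θ r : ℝ} (hθ : 0 ≤ Real.cos θ)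
    {S : Set E} (hcone : ∀ a ∈ S, ∀ x ∈ S, x ∈ ball a r → x ≠ a →
      infDist (x - a) K < Real.sin θ * dist x a)
    {a b : E} (ha : a ∈ S) (hb : b ∈ S) (hab : dist a b < r) :
    Real.cos θ * dist a b ≤ dist (K.starProjection a) (K.starProjection b) := by
  rcases eq_or_ne b a with rfl | hba
  · simp
  have hcone_ab := hcone a ha b hb (mem_ball.2 (dist_comm a b ▸ hab)) hba
  rw [dist_eq_norm', dist_eq_norm', ← map_sub]
  rw [dist_eq_norm] at hcone_ab
  exact K.cos_mul_norm_le_norm_starProjection hθ hcone_ab.le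

end Projection

section LowerBound

variable {α β : Type*} [MetricSpace α] [PseudoMetricSpace β] {f : α → β} {s : Set α} {c : ℝ}

theorem injOn_of_mul_dist_le (hc : 0 < c)
    (h : ∀ a ∈ s, ∀ b ∈ s, c * dist a b ≤ dist (f a) (f b)) : InjOn f s := by
  intro a ha b hb hab
  have := h a ha b hb
  rw [hab, dist_self] at this
  exact dist_le_zero.1 (nonpos_of_mul_nonpos_right this hc)

theorem lipschitzOnWith_invFunOn_of_mul_dist_le [Nonempty α] (hc : 0 < c)
    (h : ∀ a ∈ s, ∀ b ∈ s, c * dist a b ≤ dist (f a) (f b)) :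
    LipschitzOnWith (1 / c).toNNReal (invFunOn f s) (f '' s) := by
  have hinv : ∀ a ∈ s, invFunOn f s (f a) = a := fun a ha =>
    (injOn_of_mul_dist_le hc h).leftInvOn_invFunOn ha
  refine LipschitzOnWith.of_dist_le_mul ?_
  rintro _ ⟨a, ha, rfl⟩ _ ⟨b, hb, rfl⟩
  rw [hinv a ha, hinv b hb, Real.coe_toNNReal _ (by positivity), one_div_mul_eq_div,
    le_div_iff₀ hc, mul_comm]
  exact h a ha b hb

end LowerBound

theorem Submodule.exists_lipschitzOnWith_subset_image_of_mul_dist_le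
    {E : Type*} [NormedAddCommGroup E] [InnerProductSpace ℝ E] {d : ℕ}
    (K : Submodule ℝ E) [FiniteDimensional ℝ K] (hK : Module.finrank ℝ K = d)
    {S : Set E} {c : ℝ} (hc : 0 < c)
    (h : ∀ a ∈ S, ∀ b ∈ S, c * dist a b ≤ dist (K.starProjection a) (K.starProjection b)) :
    ∃ (s : Set (EuclideanSpace ℝ (Fin d))) (f : EuclideanSpace ℝ (Fin d) → E),
      LipschitzOnWith (1 / c).toNNReal f s ∧ S ⊆ f '' s := by
  subst hK
  set P := K.orthogonalProjectionOnto
  set φ := (stdOrthonormalBasis ℝ K).repr.symm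
  have hinj : InjOn P S := injOn_of_mul_dist_le hc h
  have hlip : LipschitzOnWith ((1 / c).toNNReal * 1) (invFunOn P S ∘ φ) (φ ⁻¹' (P '' S)) :=
    (lipschitzOnWith_invFunOn_of_mul_dist_le (f := P) hc h).comp φ.lipschitz.lipschitzOnWith
      fun _ hv => hv
  refine ⟨φ ⁻¹' (P '' S), invFunOn P S ∘ φ, by rwa [mul_one] at hlip, fun x hx => ?_⟩
  refine ⟨φ.symm (P x), by simpa using mem_image_of_mem P hx, ?_⟩
  simpa using hinj.leftInvOn_invFunOn hx

theorem exists_seq_subset_iUnion_of_dist_lt {α : Type*} [PseudoMetricSpace α]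
    [TopologicalSpace.SeparableSpace α] (A : Set α) {ρ : ℝ} (hρ : 0 < ρ) :
    ∃ S : ℕ → Set α, (∀ i, S i ⊆ A) ∧ A ⊆ ⋃ i, S i ∧
      ∀ i, ∀ a ∈ S i, ∀ b ∈ S i, dist a b < ρ := by
  rcases isEmpty_or_nonempty α with _ | _
  · exact ⟨fun _ => ∅, fun _ => empty_subset _, fun x => isEmptyElim x, by simp⟩
  set u := TopologicalSpace.denseSeq α
  refine ⟨fun i => A ∩ ball (u i) (ρ / 2), fun _ => inter_subset_left, fun x hx => ?_, ?_⟩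
  · obtain ⟨i, hi⟩ := (TopologicalSpace.denseRange_denseSeq α).exists_dist_lt x (half_pos hρ)
    exact mem_iUnion.2 ⟨i, hx, mem_ball.2 hi⟩
  · rintro i a ⟨-, ha⟩ b ⟨-, hb⟩
    linarith [dist_triangle_right a b (u i), mem_ball.1 ha, mem_ball.1 hb]

theorem stmt13_general {n d : ℕ}
    (E : Set (EuclideanSpace ℝ (Fin n)))
    (V : Submodule ℝ (EuclideanSpace ℝ (Fin n))) (hV : Module.finrank ℝ V = d)
    (θ : ℝ) (hθ : θ ∈ Ioo 0 (Real.pi / 2)) (r : ℝ) (hr : 0 < r)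
    (hcone : ∀ a ∈ E, ∀ x ∈ E, x ∈ ball a r → x ≠ a →
      infDist (x - a) (V : Set (EuclideanSpace ℝ (Fin n))) < Real.sin θ * dist x a) :
    ((EMetric.diam E < ENNReal.ofReal r →
      (∀ a ∈ E, ∀ b ∈ E,
        Real.cos θ * dist a b ≤
          dist ((Submodule.orthogonalProjection V a : EuclideanSpace ℝ (Fin n)))
            ((Submodule.orthogonalProjection V b : EuclideanSpace ℝ (Fin n)))) ∧
      Set.InjOn (fun a => (Submodule.orthogonalProjection V a : EuclideanSpace ℝ (Fin n))) E ∧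
      ∃ g : EuclideanSpace ℝ (Fin n) → EuclideanSpace ℝ (Fin n),
        LipschitzOnWith (Real.toNNReal (1 / Real.cos θ)) g
          ((fun a => (Submodule.orthogonalProjection V a : EuclideanSpace ℝ (Fin n))) '' E) ∧
        ∀ a ∈ E, g ((Submodule.orthogonalProjection V a : EuclideanSpace ℝ (Fin n))) = a)) ∧
    ∃ (s : ℕ → Set (EuclideanSpace ℝ (Fin d)))
      (f : ℕ → EuclideanSpace ℝ (Fin d) → EuclideanSpace ℝ (Fin n))
      (K : ℕ → NNReal),
      (∀ i, LipschitzOnWith (K i) (f i) (s i)) ∧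
      μH[(d : ℝ)] (E \ ⋃ i, f i '' s i) = 0 := by
  have hcos : 0 < Real.cos θ := Real.cos_pos_of_mem_Ioo ⟨by linarith [hθ.1, Real.pi_pos], hθ.2⟩
  have hlower : ∀ S ⊆ E, (∀ a ∈ S, ∀ b ∈ S, dist a b < r) →
      ∀ a ∈ S, ∀ b ∈ S, Real.cos θ * dist a b ≤ dist (V.starProjection a) (V.starProjection b) :=
    fun S hSE hS a ha b hb =>
      V.cos_mul_dist_le_dist_starProjection hcos.le hcone (hSE ha) (hSE hb) (hS a ha b hb)
  refine ⟨fun hdiam => ?_, ?_⟩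
  · have hE := hlower E subset_rfl fun a ha b hb =>
      edist_lt_ofReal.1 ((edist_le_ediam_of_mem ha hb).trans_lt hdiam)
    have hinj := injOn_of_mul_dist_le hcos hE
    exact ⟨hE, hinj, _, lipschitzOnWith_invFunOn_of_mul_dist_le hcos hE,
      fun a ha => hinj.leftInvOn_invFunOn ha⟩
  · obtain ⟨S, hSE, hES, hS⟩ := exists_seq_subset_iUnion_of_dist_lt E hr
    choose s f hf hSf using fun i =>
      V.exists_lipschitzOnWith_subset_image_of_mul_dist_le hV hcos (hlower (S i) (hSE i) (hS i))
    refine ⟨s, f, fun _ => (1 / Real.cos θ).toNNReal, hf, ?_⟩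
    rw [sdiff_eq_empty.2 (hES.trans (iUnion_mono hSf)), measure_empty]

theorem stmt13 {n d : ℕ} (hd : 0 < d) (hdn : d < n)
    (E : Set (EuclideanSpace ℝ (Fin n)))
    (V : Submodule ℝ (EuclideanSpace ℝ (Fin n))) (hV : Module.finrank ℝ V = d)
    (θ : ℝ) (hθ : θ ∈ Ioo 0 (Real.pi / 2)) (r : ℝ) (hr : 0 < r)
    (hcone : ∀ a ∈ E, ∀ x ∈ E, x ∈ ball a r → x ≠ a →
      infDist (x - a) (V : Set (EuclideanSpace ℝ (Fin n))) < Real.sin θ * dist x a) :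
    ((EMetric.diam E < ENNReal.ofReal r →
      (∀ a ∈ E, ∀ b ∈ E,
        Real.cos θ * dist a b ≤
          dist ((Submodule.orthogonalProjection V a : EuclideanSpace ℝ (Fin n)))
            ((Submodule.orthogonalProjection V b : EuclideanSpace ℝ (Fin n)))) ∧
      Set.InjOn (fun a => (Submodule.orthogonalProjection V a : EuclideanSpace ℝ (Fin n))) E ∧
      ∃ g : EuclideanSpace ℝ (Fin n) → EuclideanSpace ℝ (Fin n),
        LipschitzOnWith (Real.toNNReal (1 / Real.cos θ)) g
          ((fun a => (Submodule.orthogonalProjection V a : EuclideanSpace ℝ (Fin n))) '' E) ∧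
        ∀ a ∈ E, g ((Submodule.orthogonalProjection V a : EuclideanSpace ℝ (Fin n))) = a)) ∧
    ∃ (s : ℕ → Set (EuclideanSpace ℝ (Fin d)))
      (f : ℕ → EuclideanSpace ℝ (Fin d) → EuclideanSpace ℝ (Fin n))
      (K : ℕ → NNReal),
      (∀ i, LipschitzOnWith (K i) (f i) (s i)) ∧
      μH[(d : ℝ)] (E \ ⋃ i, f i '' s i) = 0 :=
  stmt13_general E V hV θ hθ r hr hcone
end
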